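/- arXiv:2407.09031 — 3 statements merged into one kernel-verified Lean document; each statement's English description precedes it below -/
import Mathlib

section
/- Let γ ∈ (-3,0) and k₀ > 3. There is a constant C such that for every measurable g : ℝ³ → ℝ with |g(v)| ≤ ⟨v⟩^{-k₀} for a.e. v, one has |∫_{ℝ³} |v - v_*|^γ g(v_*) dv_*| ≤ C ⟨v⟩^γ for all v ∈ ℝ³, where ⟨v⟩ = (1+|v|²)^{1/2}. -/
/-!
Split the integral at `‖v - w‖ = ⟨v⟩ / 2`. On the near region `⟨w⟩ ≥ ⟨v⟩ / 2`, so
`|g| ≲ ⟨v⟩ ^ (-k₀)` there, while the integrable singularity `‖x‖ ^ γ` over a ball of radius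
`⟨v⟩ / 2` contributes `⟨v⟩ ^ (3 + γ)`; as `k₀ > 3` the product is `≲ ⟨v⟩ ^ γ`. On the far region
the kernel is at most `(⟨v⟩ / 2) ^ γ` and `⟨w⟩ ^ (-k₀)` is integrable.
-/

open MeasureTheory Set Metric Real Module

lemma rpow_natCast_sub_one_smul_indicator_Iio_rpow {n : ℕ} (hn : 1 ≤ n) {γ R y : ℝ}
    (hy : y ∈ Ioi 0) :
    y ^ (n - 1) • (Iio R).indicator (· ^ γ) y = (Iio R).indicator (· ^ ((n : ℝ) - 1 + γ)) y := by
  by_cases hyR : y ∈ Iio R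
  · rw [indicator_of_mem hyR, indicator_of_mem hyR, smul_eq_mul, ← rpow_natCast,
      ← rpow_add hy, Nat.cast_sub hn, Nat.cast_one]
  · simp [indicator_of_notMem hyR]

lemma abs_rpow_mul_le_indicator_add {γ R M d b p : ℝ} (hγ : γ ≤ 0) (hR : 0 < R) (hd : 0 ≤ d)
    (hb : |b| ≤ p) (hM : d < R → p ≤ M) :
    |d ^ γ * b| ≤ M * (Iio R).indicator (· ^ γ) d + R ^ γ * p := by
  have hdγ : 0 ≤ d ^ γ := rpow_nonneg hd γ
  have hp : 0 ≤ p := (abs_nonneg b).trans hb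
  rw [abs_mul, abs_of_nonneg hdγ]
  by_cases hdR : d < R
  · rw [indicator_of_mem (mem_Iio.2 hdR)]
    nlinarith [hM hdR, rpow_nonneg hR.le γ]
  · rw [indicator_of_notMem (notMem_Iio.2 (not_lt.1 hdR))]
    have : d ^ γ ≤ R ^ γ := rpow_le_rpow_of_nonpos hR (not_lt.1 hdR) hγ
    nlinarith

section HaarMeasure

variable {E : Type*} [NormedAddCommGroup E] [NormedSpace ℝ E] [FiniteDimensional ℝ E]
  [Nontrivial E] [MeasurableSpace E] [BorelSpace E] (μ : Measure E) [μ.IsAddHaarMeasure]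
  {γ : ℝ}

lemma integrable_indicator_Iio_norm_rpow (hγ : -(finrank ℝ E : ℝ) < γ) (R : ℝ) :
    Integrable (fun x : E ↦ (Iio R).indicator (· ^ γ) ‖x‖) μ := by
  rw [integrable_fun_norm_addHaar μ, integrableOn_congr_fun
    (fun y hy ↦ rpow_natCast_sub_one_smul_indicator_Iio_rpow finrank_pos hy) measurableSet_Ioi,
    integrableOn_indicator_iff measurableSet_Iio, Iio_inter_Ioi]
  rcases le_or_gt R 0 with hR | hR
  · simp [Ioo_eq_empty_of_le hR]
  · exact (intervalIntegral.integrableOn_Ioo_rpow_iff hR).2 (by linarith)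

lemma integral_indicator_Iio_norm_rpow (hγ : -(finrank ℝ E : ℝ) < γ) {R : ℝ} (hR : 0 ≤ R) :
    ∫ x : E, (Iio R).indicator (· ^ γ) ‖x‖ ∂μ
      = finrank ℝ E * μ.real (ball 0 1) * (R ^ (finrank ℝ E + γ) / (finrank ℝ E + γ)) := by
  have hn : (0 : ℝ) < finrank ℝ E + γ := by linarith
  rw [integral_fun_norm_addHaar μ, setIntegral_congr_fun measurableSet_Ioi
    (fun y hy ↦ rpow_natCast_sub_one_smul_indicator_Iio_rpow finrank_pos hy),
    setIntegral_indicator measurableSet_Iio, Ioi_inter_Iio, ← integral_Ioc_eq_integral_Ioo,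
    ← intervalIntegral.integral_of_le hR, integral_rpow (Or.inl (by linarith)),
    show (finrank ℝ E : ℝ) - 1 + γ + 1 = finrank ℝ E + γ by ring, zero_rpow hn.ne', sub_zero,
    nsmul_eq_mul, smul_eq_mul, mul_assoc]

theorem abs_integral_norm_sub_rpow_mul_le (hγ : -(finrank ℝ E : ℝ) < γ) (hγ₀ : γ ≤ 0) {R M : ℝ}
    (hR : 0 < R) {g φ : E → ℝ} (hφ : Integrable φ μ) (hgφ : ∀ᵐ w ∂μ, |g w| ≤ φ w) (v : E)
    (hφM : ∀ w, ‖v - w‖ < R → φ w ≤ M) :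
    |∫ w, ‖v - w‖ ^ γ * g w ∂μ|
      ≤ M * (finrank ℝ E * μ.real (ball 0 1) * (R ^ (finrank ℝ E + γ) / (finrank ℝ E + γ)))
        + R ^ γ * ∫ w, φ w ∂μ := by
  set K : E → ℝ := fun x ↦ (Iio R).indicator (· ^ γ) ‖x‖
  have hK : Integrable (fun w ↦ M * K (v - w)) μ :=
    ((integrable_indicator_Iio_norm_rpow μ hγ R).comp_sub_left v).const_mul M
  have hbound : ∀ᵐ w ∂μ, ‖‖v - w‖ ^ γ * g w‖ ≤ M * K (v - w) + R ^ γ * φ w := by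
    filter_upwards [hgφ] with w hw
    exact abs_rpow_mul_le_indicator_add hγ₀ hR (norm_nonneg _) hw (hφM w)
  -- No measurability of `g` is needed: a non-integrable integrand has integral `0`.
  calc |∫ w, ‖v - w‖ ^ γ * g w ∂μ|
      ≤ ∫ w, (M * K (v - w) + R ^ γ * φ w) ∂μ :=
        norm_integral_le_of_norm_le (hK.add (hφ.const_mul _)) hbound
    _ = M * ∫ x, K x ∂μ + R ^ γ * ∫ w, φ w ∂μ := by
        rw [integral_add hK (hφ.const_mul _), integral_const_mul, integral_const_mul,
          integral_sub_left_eq_self K μ v]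
    _ = _ := by rw [integral_indicator_Iio_norm_rpow μ hγ hR.le]

end HaarMeasure

lemma sqrt_one_add_norm_sq_div_two_le {F : Type*} [SeminormedAddCommGroup F] {v w : F}
    (h : ‖v - w‖ < √(1 + ‖v‖ ^ 2) / 2) : √(1 + ‖v‖ ^ 2) / 2 ≤ √(1 + ‖w‖ ^ 2) := by
  have h4 : (2 : ℝ) ^ 2 = 4 := by norm_num
  have hd : ‖v - w‖ ^ 2 ≤ (1 + ‖v‖ ^ 2) / 4 := by
    have := pow_le_pow_left₀ (norm_nonneg _) h.le 2
    rwa [div_pow, sq_sqrt (by positivity), h4] at this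
  have htri : ‖v‖ ^ 2 ≤ (‖v - w‖ + ‖w‖) ^ 2 :=
    pow_le_pow_left₀ (norm_nonneg v) (norm_le_norm_sub_add v w) 2
  rw [le_sqrt (by positivity) (by positivity), div_pow, sq_sqrt (by positivity), h4]
  nlinarith [sq_nonneg (‖v - w‖ - ‖w‖)]

lemma one_add_norm_sq_rpow_neg_le {F : Type*} [SeminormedAddCommGroup F] {v w : F} {k : ℝ}
    (hk : 0 ≤ k) (h : ‖v - w‖ < √(1 + ‖v‖ ^ 2) / 2) :
    (1 + ‖w‖ ^ 2) ^ (-k / 2) ≤ (√(1 + ‖v‖ ^ 2) / 2) ^ (-k) := by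
  rw [rpow_div_two_eq_sqrt _ (by positivity)]
  exact rpow_le_rpow_of_nonpos (by positivity) (sqrt_one_add_norm_sq_div_two_le h) (by linarith)

lemma rpow_neg_mul_rpow_add_le {R a k γ : ℝ} (hR : 1 / 2 ≤ R) (hak : a ≤ k) :
    R ^ (-k) * R ^ (a + γ) ≤ 2 ^ (k - a) * R ^ γ := by
  have hR₀ : 0 < R := by linarith
  calc R ^ (-k) * R ^ (a + γ) = R ^ (a - k) * R ^ γ := by
        rw [← rpow_add hR₀, ← rpow_add hR₀]; ring_nf
    _ ≤ (1 / 2) ^ (a - k) * R ^ γ :=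
        mul_le_mul_of_nonneg_right (rpow_le_rpow_of_nonpos (by norm_num) hR (by linarith))
          (rpow_nonneg hR₀.le γ)
    _ = 2 ^ (k - a) * R ^ γ := by
        rw [one_div, inv_rpow zero_le_two, ← rpow_neg zero_le_two, neg_sub]

/-- For `γ ∈ (-3,0)` and `k₀ > 3`, there is a constant `C` such that for every
measurable `g` with `|g(v)| ≤ ⟨v⟩^{-k₀}` a.e., one has
`|∫ |v - v_*|^γ g(v_*) dv_*| ≤ C ⟨v⟩^γ` for all `v`, where `⟨v⟩ = (1+|v|²)^{1/2}`. -/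
theorem soft_potential_convolution_bound
    (γ : ℝ) (hγ₁ : -3 < γ) (hγ₂ : γ < 0)
    (k₀ : ℝ) (hk₀ : 3 < k₀) :
    ∃ C : ℝ, 0 < C ∧
      ∀ g : EuclideanSpace ℝ (Fin 3) → ℝ, Measurable g →
        (∀ᵐ v : EuclideanSpace ℝ (Fin 3), |g v| ≤ (1 + ‖v‖ ^ 2) ^ (-k₀ / 2)) →
        ∀ v : EuclideanSpace ℝ (Fin 3),
          |∫ w : EuclideanSpace ℝ (Fin 3), ‖v - w‖ ^ γ * g w|
            ≤ C * (1 + ‖v‖ ^ 2) ^ (γ / 2) := by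
  set κ := (volume : Measure (EuclideanSpace ℝ (Fin 3))).real (ball 0 1)
  set I := ∫ w : EuclideanSpace ℝ (Fin 3), (1 + ‖w‖ ^ 2) ^ (-k₀ / 2)
  have hκ : 0 < κ := ENNReal.toReal_pos (measure_ball_pos _ _ one_pos).ne' measure_ball_lt_top.ne
  have hI : 0 ≤ I := integral_nonneg fun w ↦ by positivity
  have h3γ : 0 < 3 + γ := by linarith
  have hdim : (finrank ℝ (EuclideanSpace ℝ (Fin 3)) : ℝ) = 3 := by simp
  have hc : 0 < 3 * κ / (3 + γ) := by positivity
  refine ⟨2 ^ (-γ) * (3 * κ / (3 + γ) * 2 ^ (k₀ - 3) + I), by positivity, fun g _ hg v ↦ ?_⟩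
  set R := √(1 + ‖v‖ ^ 2) / 2
  have hR : 1 / 2 ≤ R := div_le_div_of_nonneg_right (one_le_sqrt.2 (by simp)) zero_le_two
  have hφ : Integrable (fun w : EuclideanSpace ℝ (Fin 3) ↦ (1 + ‖w‖ ^ 2) ^ (-k₀ / 2)) :=
    integrable_rpow_neg_one_add_norm_sq (by rw [hdim]; exact hk₀)
  have hsplit := abs_integral_norm_sub_rpow_mul_le volume (by rw [hdim]; linarith) hγ₂.le
    (by positivity) hφ hg v (fun w ↦ one_add_norm_sq_rpow_neg_le (by linarith))
  rw [hdim] at hsplit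
  calc _ ≤ _ := hsplit
    _ = 3 * κ / (3 + γ) * (R ^ (-k₀) * R ^ (3 + γ)) + I * R ^ γ := by ring
    _ ≤ 3 * κ / (3 + γ) * (2 ^ (k₀ - 3) * R ^ γ) + I * R ^ γ :=
        add_le_add_left (mul_le_mul_of_nonneg_left (rpow_neg_mul_rpow_add_le hR hk₀.le) hc.le) _
    _ = _ := by
        rw [div_rpow (sqrt_nonneg _) zero_le_two, ← rpow_div_two_eq_sqrt _ (by positivity),
          div_eq_mul_inv _ ((2 : ℝ) ^ γ), ← rpow_neg zero_le_two]
        ring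
end

section
/- Let u, v, w : ℝ₊ → ℝ₊ be continuous with u ≤ v ≤ w, and suppose there are constants C, σ > 0 and positive functions R ↦ ε_R, ϑ_R with ε_R → 0 and ϑ_R/ε_R → 0 as R → ∞, such that v'(t) + σ u(t) ≤ 0, w(t) ≤ C w(0), and ε_R v(t) ≤ u(t) + ϑ_R w(t) for all t > 0 and R > 0. Then for all t ≥ 0, v(t) ≤ Γ(t) w(0), where Γ(t) = inf_{R>0} ( e^{-σ ε_R t} + C ϑ_R/ε_R ). -/
/-!
For each `R > 0`, the splitting inequality turns dissipation into the linear differential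
inequality `v' ≤ -σ ε_R v + σ ϑ_R C w(0)`, and an integrating factor gives
`v(t) ≤ e^{-σ ε_R t} w(0) + C ϑ_R w(0) / ε_R`. Taking the infimum over `R` gives the claim.
-/

open Real Set

theorem le_exp_mul_sub_add_of_hasDerivAt_le {v v' : ℝ → ℝ} {a b : ℝ} (ha : a ≠ 0)
    (hv : ContinuousOn v (Ici 0)) (hderiv : ∀ t ∈ Ioi (0 : ℝ), HasDerivAt v (v' t) t)
    (hle : ∀ t ∈ Ioi (0 : ℝ), v' t ≤ -a * v t + b) :
    ∀ t ∈ Ici (0 : ℝ), v t ≤ exp (-a * t) * (v 0 - b / a) + b / a := by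
  intro t ht
  have hanti : AntitoneOn (fun s => exp (a * s) * (v s - b / a)) (Ici 0) := by
    refine antitoneOn_of_hasDerivWithinAt_nonpos (convex_Ici 0)
      (f' := fun s => exp (a * s) * (v' s + a * v s - b)) ?_ ?_ ?_
    · exact ((continuous_exp.comp (continuous_const_mul a)).continuousOn).mul
        (hv.sub continuousOn_const)
    · intro s hs
      rw [interior_Ici] at hs
      have hexp : HasDerivAt (fun s => exp (a * s)) (exp (a * s) * a) s := by
        simpa using ((hasDerivAt_id s).const_mul a).exp
      refine ((hexp.mul ((hderiv s hs).sub_const (b / a))).congr_deriv ?_).hasDerivWithinAt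
      field_simp
      ring
    · intro s hs
      rw [interior_Ici] at hs
      have := hle s hs
      exact mul_nonpos_of_nonneg_of_nonpos (exp_pos _).le (by linarith)
  have h := hanti self_mem_Ici ht ht
  simp only [mul_zero, exp_zero, one_mul] at h
  have hinv : exp (-a * t) * exp (a * t) = 1 := by rw [← exp_add]; simp
  calc v t = exp (-a * t) * (exp (a * t) * (v t - b / a)) + b / a := by
        rw [← mul_assoc, hinv]; ring
    _ ≤ exp (-a * t) * (v 0 - b / a) + b / a := by gcongr

theorem le_csInf_mul_of_forall_le_mul {S : Set ℝ} {x c : ℝ} (hS : S.Nonempty) (hc : 0 ≤ c)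
    (h : ∀ y ∈ S, x ≤ y * c) : x ≤ sInf S * c := by
  rcases hc.eq_or_lt with rfl | hc
  · obtain ⟨y, hy⟩ := hS
    simpa using h y hy
  · rw [← div_le_iff₀ hc]
    exact le_csInf hS fun y hy => (div_le_iff₀ hc).2 (h y hy)

theorem le_exp_add_mul_of_dissipative {u v w v' : ℝ → ℝ} {C σ e θ : ℝ} (hC : 0 ≤ C)
    (hσ : 0 < σ) (he : 0 < e) (hθ : 0 ≤ θ) (hv : ContinuousOn v (Ici 0))
    (hw0 : 0 ≤ w 0) (hvw0 : v 0 ≤ w 0)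
    (hderiv : ∀ t ∈ Ioi (0 : ℝ), HasDerivAt v (v' t) t)
    (hdiss : ∀ t ∈ Ioi (0 : ℝ), v' t + σ * u t ≤ 0)
    (hwbd : ∀ t ∈ Ioi (0 : ℝ), w t ≤ C * w 0)
    (hsplit : ∀ t ∈ Ioi (0 : ℝ), e * v t ≤ u t + θ * w t) :
    ∀ t ∈ Ici (0 : ℝ), v t ≤ (exp (-σ * e * t) + C * θ / e) * w 0 := by
  have hlin : ∀ t ∈ Ioi (0 : ℝ), v' t ≤ -(σ * e) * v t + σ * θ * (C * w 0) := by
    intro t ht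
    have hθw : θ * w t ≤ θ * (C * w 0) := mul_le_mul_of_nonneg_left (hwbd t ht) hθ
    nlinarith [hdiss t ht, hsplit t ht]
  intro t ht
  have hσe : σ * e ≠ 0 := (mul_pos hσ he).ne'
  have hbound := le_exp_mul_sub_add_of_hasDerivAt_le hσe hv hderiv hlin t ht
  have hquot : σ * θ * (C * w 0) / (σ * e) = C * θ / e * w 0 := by
    field_simp
  have hexponent : -(σ * e) * t = -σ * e * t := by ring
  rw [hquot, hexponent] at hbound
  have hquot_nonneg : 0 ≤ C * θ / e * w 0 := by positivity
  calc v t ≤ exp (-σ * e * t) * (v 0 - C * θ / e * w 0) + C * θ / e * w 0 := hbound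
    _ ≤ exp (-σ * e * t) * w 0 + C * θ / e * w 0 := by
        gcongr
        linarith
    _ = (exp (-σ * e * t) + C * θ / e) * w 0 := by ring

theorem gronwall_weakly_dissipative_general
    (u v w v' : ℝ → ℝ) (C σ : ℝ) (hC : 0 < C) (hσ : 0 < σ)
    (hv : ContinuousOn v (Set.Ici 0))
    (hu0 : ∀ t ∈ Set.Ici (0 : ℝ), 0 ≤ u t)
    (huv : ∀ t ∈ Set.Ici (0 : ℝ), u t ≤ v t)
    (hvw : ∀ t ∈ Set.Ici (0 : ℝ), v t ≤ w t)
    (ε ϑ : ℝ → ℝ)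
    (hε : ∀ R : ℝ, 0 < R → 0 < ε R) (hϑ : ∀ R : ℝ, 0 < R → 0 < ϑ R)
    (hderiv : ∀ t ∈ Set.Ioi (0 : ℝ), HasDerivAt v (v' t) t)
    (hdiss : ∀ t ∈ Set.Ioi (0 : ℝ), v' t + σ * u t ≤ 0)
    (hwbd : ∀ t ∈ Set.Ioi (0 : ℝ), w t ≤ C * w 0)
    (hsplit : ∀ t ∈ Set.Ioi (0 : ℝ), ∀ R : ℝ, 0 < R → ε R * v t ≤ u t + ϑ R * w t) :
    ∀ t ∈ Set.Ici (0 : ℝ),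
      v t ≤ sInf {y : ℝ | ∃ R : ℝ, 0 < R ∧
        y = Real.exp (-σ * ε R * t) + C * ϑ R / ε R} * w 0 := by
  intro t ht
  have hvw0 := hvw 0 self_mem_Ici
  have hw0 : 0 ≤ w 0 := (hu0 0 self_mem_Ici).trans ((huv 0 self_mem_Ici).trans hvw0)
  refine le_csInf_mul_of_forall_le_mul ⟨_, 1, one_pos, rfl⟩ hw0 ?_
  rintro _ ⟨R, hR, rfl⟩
  exact le_exp_add_mul_of_dissipative hC.le hσ (hε R hR) (hϑ R hR).le hv hw0 hvw0 hderiv hdiss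
    hwbd (fun s hs => hsplit s hs R hR) t ht

/-- Weakly dissipative Grönwall variant: if `u ≤ v ≤ w` are continuous
nonnegative on `ℝ₊`, `v' + σu ≤ 0`, `w ≤ C w(0)` and `ε_R v ≤ u + ϑ_R w` with
`ε_R → 0`, `ϑ_R/ε_R → 0`, then `v(t) ≤ Γ(t) w(0)` with
`Γ(t) = inf_{R>0} (e^{-σ ε_R t} + C ϑ_R/ε_R)`. -/
theorem gronwall_weakly_dissipative
    (u v w v' : ℝ → ℝ) (C σ : ℝ) (hC : 0 < C) (hσ : 0 < σ)
    (hu : ContinuousOn u (Set.Ici 0)) (hv : ContinuousOn v (Set.Ici 0))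
    (hw : ContinuousOn w (Set.Ici 0))
    (hu0 : ∀ t ∈ Set.Ici (0 : ℝ), 0 ≤ u t)
    (huv : ∀ t ∈ Set.Ici (0 : ℝ), u t ≤ v t)
    (hvw : ∀ t ∈ Set.Ici (0 : ℝ), v t ≤ w t)
    (ε ϑ : ℝ → ℝ)
    (hε : ∀ R : ℝ, 0 < R → 0 < ε R) (hϑ : ∀ R : ℝ, 0 < R → 0 < ϑ R)
    (hεlim : Filter.Tendsto ε Filter.atTop (nhds 0))
    (hϑεlim : Filter.Tendsto (fun R => ϑ R / ε R) Filter.atTop (nhds 0))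
    (hderiv : ∀ t ∈ Set.Ioi (0 : ℝ), HasDerivAt v (v' t) t)
    (hdiss : ∀ t ∈ Set.Ioi (0 : ℝ), v' t + σ * u t ≤ 0)
    (hwbd : ∀ t ∈ Set.Ioi (0 : ℝ), w t ≤ C * w 0)
    (hsplit : ∀ t ∈ Set.Ioi (0 : ℝ), ∀ R : ℝ, 0 < R → ε R * v t ≤ u t + ϑ R * w t) :
    ∀ t ∈ Set.Ici (0 : ℝ),
      v t ≤ sInf {y : ℝ | ∃ R : ℝ, 0 < R ∧
        y = Real.exp (-σ * ε R * t) + C * ϑ R / ε R} * w 0 :=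
  gronwall_weakly_dissipative_general u v w v' C σ hC hσ hv hu0 huv hvw ε ϑ hε hϑ hderiv hdiss hwbd
    hsplit
end

section
/- Let Ω ⊂ ℝ³ be a bounded open set with smooth boundary, δ(x) = dist(x, ∂Ω), and let n_x denote the unit outward normal extended smoothly near ∂Ω. There is a constant C such that for every f ∈ H¹_v with appropriate decay, ∫_{Ω×ℝ³} f² ⟨v⟩^{-2} δ^{-1/8} dx dv ≤ C ( ∫_{Ω×ℝ³} f² ⟨v⟩^{-2} (n_x·v)²/δ^{1/2} dx dv + ∫_{Ω×ℝ³} |∇_v f|² dx dv ). -/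
/-!
Fix `x ∈ Ω`, put `e = n x`, `δ = δ(x)`, and split velocity space into the strip `⟪e, v⟫² ≤ ε²`
and its complement. Off the strip `⟪e, v⟫² > ε²`, so the normal-penalized term controls
`f² ⟨v⟩⁻²` at the price `ε⁻²`. On the strip, `f(v)` is compared with `f(v + τ e)` for
`τ ∈ (2ε, 3ε]`: the shifted point lies off the strip, the weight `⟨v⟩⁻²` changes by a bounded
factor, and the difference is bounded by the fundamental theorem of calculus and Cauchy–Schwarz
along the segment. Averaging over `τ` and integrating over `v` (translation invariance) costs
`18 ε² ∫ |∇_v f|²`. With `ε = δ^{3/16}`, multiplying by `δ^{-1/8}` turns the two coefficients into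
`O(δ^{-1/2})` and `O(δ^{1/4}) = O(1)`, uniformly in `x` because `δ ≤ diam Ω`.
-/

open MeasureTheory Set Filter Topology
open scoped ENNReal RealInnerProductSpace

lemma sq_lintegral_le_measure_univ_mul {α : Type*} [MeasurableSpace α] (μ : Measure α)
    {h : α → ℝ≥0∞} (hh : AEMeasurable h μ) :
    (∫⁻ a, h a ∂μ) ^ 2 ≤ μ univ * ∫⁻ a, h a ^ 2 ∂μ := by
  have H := ENNReal.lintegral_mul_le_Lp_mul_Lq μ Real.HolderConjugate.two_two hh
    aemeasurable_const (g := fun _ => 1)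
  simp only [Pi.mul_apply, mul_one, ENNReal.one_rpow, lintegral_const, one_mul] at H
  calc (∫⁻ a, h a ∂μ) ^ 2
      ≤ ((∫⁻ a, h a ^ (2 : ℝ) ∂μ) ^ (1 / 2 : ℝ) * μ univ ^ (1 / 2 : ℝ)) ^ 2 := by gcongr
    _ = μ univ * ∫⁻ a, h a ^ 2 ∂μ := by
      rw [mul_pow, ← ENNReal.rpow_natCast, ← ENNReal.rpow_natCast (_ ^ _), ← ENNReal.rpow_mul,
        ← ENNReal.rpow_mul]
      simp_rw [← ENNReal.rpow_natCast]
      norm_num [mul_comm]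

lemma enorm_sub_le_lintegral_enorm_deriv {φ : ℝ → ℝ} (hφ : Differentiable ℝ φ) {a b : ℝ}
    (hab : a ≤ b) : ‖φ b - φ a‖ₑ ≤ ∫⁻ t in Ioc a b, ‖deriv φ t‖ₑ := by
  by_cases hfin : ∫⁻ t in Ioc a b, ‖deriv φ t‖ₑ = ∞
  · simp [hfin]
  have hint : IntervalIntegrable (deriv φ) volume a b := by
    rw [intervalIntegrable_iff_integrableOn_Ioc_of_le hab]
    exact ⟨(measurable_deriv φ).aestronglyMeasurable,
      hasFiniteIntegral_iff_enorm.2 (lt_top_iff_ne_top.2 hfin)⟩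
  rw [← intervalIntegral.integral_deriv_eq_sub (fun x _ => hφ x) hint,
    intervalIntegral.integral_of_le hab]
  exact enorm_integral_le_lintegral_enorm _

section Measurability

variable {α E F : Type*} [MeasurableSpace α] [NormedAddCommGroup E] [NormedSpace ℝ E]
  [NormedAddCommGroup F] [NormedSpace ℝ F] [MeasurableSpace F] [BorelSpace F]
  [SecondCountableTopology F]

lemma measurable_of_measurable_apply [FiniteDimensional ℝ E] {L : α → E →L[ℝ] F}
    (hL : ∀ w, Measurable fun a => L a w) : Measurable L := by
  let b := Module.finBasis ℝ E
  let Φ : (Fin (Module.finrank ℝ E) → F) → E →L[ℝ] F := fun c =>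
    ∑ i, (LinearMap.toContinuousLinearMap (b.coord i)).smulRight (c i)
  have hΦ : Continuous Φ := continuous_finsetSum _ fun i _ =>
    (ContinuousLinearMap.smulRightL ℝ E F _).continuous.comp (continuous_apply i)
  have hrepr : L = Φ ∘ fun a i => L a (b i) := by
    ext a w
    simp only [Φ, Function.comp_apply, sum_apply, ContinuousLinearMap.smulRight_apply,
      LinearMap.coe_toContinuousLinearMap', Module.Basis.coord_apply]
    conv_lhs => rw [← b.sum_repr w]
    simp only [map_sum, map_smul]
  rw [hrepr]
  exact hΦ.measurable.comp (measurable_pi_lambda _ fun i => hL (b i))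

variable [MeasurableSpace E] [BorelSpace E]

-- the derivative is the pointwise limit of the jointly measurable difference quotients
lemma measurable_fderiv_apply_of_measurable_uncurry {f : α → E → F}
    (hf : Measurable (Function.uncurry f)) (hd : ∀ a, Differentiable ℝ (f a)) (w : E) :
    Measurable fun p : α × E => fderiv ℝ (f p.1) p.2 w := by
  set h : ℕ → ℝ := fun k => ((k : ℝ) + 1)⁻¹
  have hmeas : ∀ k, Measurable fun p : α × E => (h k)⁻¹ • (f p.1 (p.2 + h k • w) - f p.1 p.2) :=
    fun k => ((hf.comp (measurable_fst.prodMk (measurable_snd.add_const _))).sub hf).const_smul _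
  refine measurable_of_tendsto_metrizable hmeas (tendsto_pi_nhds.2 fun p => ?_)
  have hline : HasDerivAt (fun t : ℝ => f p.1 (p.2 + t • w)) (fderiv ℝ (f p.1) p.2 w) 0 := by
    have : HasDerivAt (fun t : ℝ => p.2 + t • w) w 0 := by
      simpa using ((hasDerivAt_id (0 : ℝ)).smul_const w).const_add p.2
    have := (hd p.1 (p.2 + (0 : ℝ) • w)).hasFDerivAt.comp_hasDerivAt 0 this
    rwa [zero_smul, add_zero] at this
  have hh : Tendsto h atTop (𝓝[≠] 0) :=
    tendsto_nhdsWithin_of_tendsto_nhds_of_eventually_within _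
      (by simpa [h, one_div] using tendsto_one_div_add_atTop_nhds_zero_nat (𝕜 := ℝ))
      (Eventually.of_forall fun k => by simp [h]; positivity)
  refine ((hasDerivAt_iff_tendsto_slope.1 hline).comp hh).congr fun k => ?_
  simp [slope, h]

lemma measurable_lintegral_sq_norm_fderiv [FiniteDimensional ℝ E] {f : α → E → ℝ}
    (hf : Measurable (Function.uncurry f)) (hd : ∀ a, Differentiable ℝ (f a))
    (μ : Measure E) [SFinite μ] :
    Measurable fun a => ∫⁻ v, ENNReal.ofReal (‖fderiv ℝ (f a) v‖ ^ 2) ∂μ :=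
  (measurable_of_measurable_apply (measurable_fderiv_apply_of_measurable_uncurry hf hd)).norm
    |>.pow_const 2 |>.ennreal_ofReal |>.lintegral_prod_right'

-- `f a` need not be differentiable off `s`; pass to the extension of `f` by zero off `s`
lemma aemeasurable_lintegral_sq_norm_fderiv_restrict [FiniteDimensional ℝ E] {f : α → E → ℝ}
    {s : Set α} (hs : MeasurableSet s) (hf : Measurable (Function.uncurry f))
    (hd : ∀ a ∈ s, Differentiable ℝ (f a)) (μ : Measure E) [SFinite μ] (ν : Measure α) :
    AEMeasurable (fun a => ∫⁻ v, ENNReal.ofReal (‖fderiv ℝ (f a) v‖ ^ 2) ∂μ) (ν.restrict s) := by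
  classical
  have hf₀ : Measurable (Function.uncurry (s.indicator f)) := by
    have : Function.uncurry (s.indicator f) = fun p => if p.1 ∈ s then f p.1 p.2 else 0 := by
      ext ⟨a, v⟩
      by_cases ha : a ∈ s <;> simp [ha]
    rw [this]
    exact Measurable.ite (measurable_fst hs) hf measurable_const
  have hd₀ : ∀ a, Differentiable ℝ (s.indicator f a) := fun a => by
    by_cases ha : a ∈ s
    · simpa [ha] using hd a ha
    · simp [ha]
  refine (measurable_lintegral_sq_norm_fderiv hf₀ hd₀ μ).aemeasurable.congr ?_
  exact ae_restrict_of_forall_mem hs fun a ha => by simp only [indicator_of_mem ha]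

end Measurability

section WeightedEstimates

variable {E : Type*} [NormedAddCommGroup E]

lemma one_add_sq_norm_add_le (v : E) {w : E} {s : ℝ} (hw : ‖w‖ ≤ s) :
    1 + ‖v + w‖ ^ 2 ≤ (1 + s) ^ 2 * (1 + ‖v‖ ^ 2) := by
  have hs : 0 ≤ s := (norm_nonneg w).trans hw
  have h : ‖v + w‖ ≤ ‖v‖ + s := (norm_add_le v w).trans (by linarith)
  have h2 : ‖v + w‖ ^ 2 ≤ (‖v‖ + s) ^ 2 := pow_le_pow_left₀ (norm_nonneg _) h 2
  nlinarith [norm_nonneg v, sq_nonneg (‖v‖ - 1), mul_nonneg hs (sq_nonneg ‖v‖), mul_nonneg hs hs,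
    mul_nonneg (mul_nonneg hs hs) (sq_nonneg ‖v‖)]

lemma inv_one_add_sq_norm_le (v : E) {w : E} {s : ℝ} (hw : ‖w‖ ≤ s) :
    (1 + ‖v‖ ^ 2)⁻¹ ≤ (1 + s) ^ 2 * (1 + ‖v + w‖ ^ 2)⁻¹ := by
  rw [← div_eq_mul_inv, le_div_iff₀ (by positivity), inv_mul_eq_div,
    div_le_iff₀ (by positivity)]
  exact one_add_sq_norm_add_le v hw

section Normed

variable [NormedSpace ℝ E]

lemma sq_sub_le_mul_lintegral_sq_norm_fderiv {g : E → ℝ} (hg : Differentiable ℝ g)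
    (v : E) {e : E} (he : ‖e‖ ≤ 1) {τ L : ℝ} (hτ : 0 ≤ τ) (hτL : τ ≤ L) :
    ENNReal.ofReal ((g (v + τ • e) - g v) ^ 2) ≤
      ENNReal.ofReal L * ∫⁻ u in Ioc 0 L, ENNReal.ofReal (‖fderiv ℝ g (v + u • e)‖ ^ 2) := by
  set φ : ℝ → ℝ := fun t => g (v + t • e)
  have hφ : ∀ t, HasDerivAt φ (fderiv ℝ g (v + t • e) e) t := fun t => by
    have hline : HasDerivAt (fun t : ℝ => v + t • e) e t := by
      simpa using ((hasDerivAt_id t).smul_const e).const_add v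
    exact (hg _).hasFDerivAt.comp_hasDerivAt t hline
  have hderiv_le : ∀ t, ‖deriv φ t‖ₑ ^ 2 ≤ ENNReal.ofReal (‖fderiv ℝ g (v + t • e)‖ ^ 2) := by
    intro t
    rw [(hφ t).deriv, ENNReal.ofReal_pow (norm_nonneg _), ofReal_norm]
    gcongr
    calc ‖fderiv ℝ g (v + t • e) e‖ₑ ≤ ‖fderiv ℝ g (v + t • e)‖ₑ * ‖e‖ₑ :=
          ContinuousLinearMap.le_opENorm _ _
      _ ≤ ‖fderiv ℝ g (v + t • e)‖ₑ := by
          rw [← ofReal_norm e]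
          exact mul_le_of_le_one_right' (ENNReal.ofReal_le_one.2 he)
  calc ENNReal.ofReal ((g (v + τ • e) - g v) ^ 2) = ‖φ τ - φ 0‖ₑ ^ 2 := by
        rw [← sq_abs, ENNReal.ofReal_pow (abs_nonneg _), ← Real.norm_eq_abs, ofReal_norm]
        simp [φ]
    _ ≤ (∫⁻ t in Ioc 0 L, ‖deriv φ t‖ₑ) ^ 2 := by
        gcongr
        exact (enorm_sub_le_lintegral_enorm_deriv (fun t => (hφ t).differentiableAt) hτ).trans
          (lintegral_mono_set (Ioc_subset_Ioc_right hτL))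
    _ ≤ volume (Ioc 0 L) * ∫⁻ t in Ioc 0 L, ‖deriv φ t‖ₑ ^ 2 := by
        simpa using sq_lintegral_le_measure_univ_mul (volume.restrict (Ioc 0 L))
          (measurable_deriv φ).enorm.aemeasurable
    _ ≤ _ := by
        rw [Real.volume_Ioc, sub_zero]
        gcongr with t
        exact hderiv_le t

end Normed

variable [InnerProductSpace ℝ E]

-- pushing `v` from the strip `|⟪e, v⟫| ≤ ε` by `τ e`, `τ ∈ [2ε, 3ε]`, makes `⟪e, ·⟫² ≥ ε²`
lemma sq_mul_inv_le_of_inner_sq_le (a b : ℝ) {v e : E} (he : ‖e‖ = 1) {ε τ : ℝ} (hε : 0 < ε)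
    (hv : ⟪e, v⟫ ^ 2 ≤ ε ^ 2) (hτ : τ ∈ Icc (2 * ε) (3 * ε)) :
    a ^ 2 * (1 + ‖v‖ ^ 2)⁻¹ ≤
      2 * (1 + 3 * ε) ^ 2 / ε ^ 2 * (b ^ 2 * (1 + ‖v + τ • e‖ ^ 2)⁻¹ * ⟪e, v + τ • e⟫ ^ 2)
        + 2 * (b - a) ^ 2 := by
  set A := (1 + ‖v‖ ^ 2)⁻¹
  set B := (1 + ‖v + τ • e‖ ^ 2)⁻¹
  set K := 1 + 3 * ε
  have hA0 : 0 < A := by positivity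
  have hA1 : A ≤ 1 := inv_le_one_of_one_le₀ (le_add_of_nonneg_right (sq_nonneg _))
  have hAB : A ≤ K ^ 2 * B := inv_one_add_sq_norm_le v (by
    rw [norm_smul, he, mul_one, Real.norm_eq_abs, abs_of_nonneg (by linarith [hτ.1])]
    exact hτ.2)
  have hinner : ⟪e, v + τ • e⟫ = ⟪e, v⟫ + τ := by
    rw [inner_add_right, real_inner_smul_right, real_inner_self_eq_norm_sq, he]
    ring
  have hc : ε ^ 2 ≤ ⟪e, v + τ • e⟫ ^ 2 := by
    have : -ε ≤ ⟪e, v⟫ := by nlinarith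
    rw [hinner]
    nlinarith [hτ.1]
  have hb : 2 * b ^ 2 * A ≤ 2 * K ^ 2 / ε ^ 2 * (b ^ 2 * B * ⟪e, v + τ • e⟫ ^ 2) := by
    calc 2 * b ^ 2 * A ≤ 2 * K ^ 2 / ε ^ 2 * (b ^ 2 * B * ε ^ 2) := by
          rw [show 2 * K ^ 2 / ε ^ 2 * (b ^ 2 * B * ε ^ 2) = 2 * b ^ 2 * (K ^ 2 * B) by
            field_simp]
          gcongr
      _ ≤ _ := by gcongr
  nlinarith [sq_nonneg (2 * b - a), sq_nonneg (b - a)]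

variable [FiniteDimensional ℝ E] [MeasurableSpace E] [BorelSpace E]

lemma lintegral_setLIntegral_add_smul (μ : Measure E) [SFinite μ] [μ.IsAddRightInvariant]
    {F : E → ℝ≥0∞} (hF : Measurable F) (e : E) (s : Set ℝ) :
    ∫⁻ v, (∫⁻ τ in s, F (v + τ • e)) ∂μ = volume s * ∫⁻ v, F v ∂μ := by
  rw [lintegral_lintegral_swap (f := fun v τ => F (v + τ • e))
    (by fun_prop : Measurable fun p : E × ℝ => F (p.1 + p.2 • e)).aemeasurable]
  simp_rw [lintegral_add_right_eq_self (μ := μ) F, setLIntegral_const, mul_comm]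

lemma ofReal_mul_le_setLIntegral_shift {g : E → ℝ} (hg : Differentiable ℝ g) {e : E}
    (he : ‖e‖ = 1) {ε : ℝ} (hε : 0 < ε) {v : E} (hv : ⟪e, v⟫ ^ 2 ≤ ε ^ 2) :
    ENNReal.ofReal ε * ENNReal.ofReal (g v ^ 2 * (1 + ‖v‖ ^ 2)⁻¹) ≤
      ENNReal.ofReal (2 * (1 + 3 * ε) ^ 2 / ε ^ 2) * (∫⁻ τ in Ioc (2 * ε) (3 * ε),
          ENNReal.ofReal (g (v + τ • e) ^ 2 * (1 + ‖v + τ • e‖ ^ 2)⁻¹ * ⟪e, v + τ • e⟫ ^ 2))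
        + ENNReal.ofReal (6 * ε ^ 2) *
          ∫⁻ u in Ioc 0 (3 * ε), ENNReal.ofReal (‖fderiv ℝ g (v + u • e)‖ ^ 2) := by
  have hgm : Measurable g := hg.continuous.measurable
  have hI : volume (Ioc (2 * ε) (3 * ε)) = ENNReal.ofReal ε := by rw [Real.volume_Ioc]; ring_nf
  have h6 : ENNReal.ofReal ε * (2 * ENNReal.ofReal (3 * ε)) = ENNReal.ofReal (6 * ε ^ 2) := by
    rw [← ENNReal.ofReal_ofNat 2, ← ENNReal.ofReal_mul zero_le_two,
      ← ENNReal.ofReal_mul hε.le]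
    ring_nf
  calc _ = ∫⁻ τ in Ioc (2 * ε) (3 * ε), ENNReal.ofReal (g v ^ 2 * (1 + ‖v‖ ^ 2)⁻¹) := by
        rw [setLIntegral_const, hI, mul_comm]
    _ ≤ ∫⁻ τ in Ioc (2 * ε) (3 * ε),
          (ENNReal.ofReal (2 * (1 + 3 * ε) ^ 2 / ε ^ 2) *
            ENNReal.ofReal (g (v + τ • e) ^ 2 * (1 + ‖v + τ • e‖ ^ 2)⁻¹ * ⟪e, v + τ • e⟫ ^ 2)
          + 2 * (ENNReal.ofReal (3 * ε) *
            ∫⁻ u in Ioc 0 (3 * ε), ENNReal.ofReal (‖fderiv ℝ g (v + u • e)‖ ^ 2))) := by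
        refine setLIntegral_mono (by fun_prop) fun τ hτ => ?_
        refine (ENNReal.ofReal_le_ofReal (sq_mul_inv_le_of_inner_sq_le (g v) (g (v + τ • e))
          he hε hv (Ioc_subset_Icc_self hτ))).trans (ENNReal.ofReal_add_le.trans (add_le_add ?_ ?_))
        · rw [ENNReal.ofReal_mul (by positivity)]
        · rw [ENNReal.ofReal_mul zero_le_two, ENNReal.ofReal_ofNat]
          gcongr
          exact sq_sub_le_mul_lintegral_sq_norm_fderiv hg v he.le (by linarith [hτ.1]) hτ.2
    _ = _ := by
        rw [lintegral_add_left (by fun_prop), lintegral_const_mul _ (by fun_prop),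
          setLIntegral_const, hI, ← h6]
        ring

variable (μ : Measure E) [SFinite μ] [μ.IsAddRightInvariant]

lemma setLIntegral_strip_le {g : E → ℝ} (hg : Differentiable ℝ g) {e : E} (he : ‖e‖ = 1)
    {ε : ℝ} (hε : 0 < ε) :
    ∫⁻ v in {v | ⟪e, v⟫ ^ 2 ≤ ε ^ 2}, ENNReal.ofReal (g v ^ 2 * (1 + ‖v‖ ^ 2)⁻¹) ∂μ ≤
      ENNReal.ofReal (2 * (1 + 3 * ε) ^ 2 / ε ^ 2) *
          ∫⁻ v, ENNReal.ofReal (g v ^ 2 * (1 + ‖v‖ ^ 2)⁻¹ * ⟪e, v⟫ ^ 2) ∂μ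
        + ENNReal.ofReal (18 * ε ^ 2) * ∫⁻ v, ENNReal.ofReal (‖fderiv ℝ g v‖ ^ 2) ∂μ := by
  have hgm : Measurable g := hg.continuous.measurable
  have hR : Measurable fun v => ENNReal.ofReal (g v ^ 2 * (1 + ‖v‖ ^ 2)⁻¹ * ⟪e, v⟫ ^ 2) := by
    fun_prop
  have hD : Measurable fun v => ENNReal.ofReal (‖fderiv ℝ g v‖ ^ 2) := by fun_prop
  have hshift : Measurable fun p : E × ℝ => p.1 + p.2 • e := by fun_prop
  have hRm : Measurable fun v => ∫⁻ τ in Ioc (2 * ε) (3 * ε),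
      ENNReal.ofReal (g (v + τ • e) ^ 2 * (1 + ‖v + τ • e‖ ^ 2)⁻¹ * ⟪e, v + τ • e⟫ ^ 2) :=
    (hR.comp hshift).lintegral_prod_right'
  have hDm : Measurable fun v => ∫⁻ u in Ioc 0 (3 * ε),
      ENNReal.ofReal (‖fderiv ℝ g (v + u • e)‖ ^ 2) :=
    (hD.comp hshift).lintegral_prod_right'
  have hRint : ∫⁻ v, (∫⁻ τ in Ioc (2 * ε) (3 * ε),
      ENNReal.ofReal (g (v + τ • e) ^ 2 * (1 + ‖v + τ • e‖ ^ 2)⁻¹ * ⟪e, v + τ • e⟫ ^ 2)) ∂μ =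
      volume (Ioc (2 * ε) (3 * ε)) *
        ∫⁻ v, ENNReal.ofReal (g v ^ 2 * (1 + ‖v‖ ^ 2)⁻¹ * ⟪e, v⟫ ^ 2) ∂μ :=
    lintegral_setLIntegral_add_smul μ hR e _
  have hDint : ∫⁻ v, (∫⁻ u in Ioc 0 (3 * ε),
      ENNReal.ofReal (‖fderiv ℝ g (v + u • e)‖ ^ 2)) ∂μ =
      volume (Ioc 0 (3 * ε)) * ∫⁻ v, ENNReal.ofReal (‖fderiv ℝ g v‖ ^ 2) ∂μ :=
    lintegral_setLIntegral_add_smul μ hD e _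
  have h18 : ENNReal.ofReal ε * ENNReal.ofReal (18 * ε ^ 2) =
      ENNReal.ofReal (6 * ε ^ 2) * ENNReal.ofReal (3 * ε) := by
    rw [← ENNReal.ofReal_mul hε.le, ← ENNReal.ofReal_mul (by positivity)]
    ring_nf
  rw [← ENNReal.mul_le_mul_iff_right (ENNReal.ofReal_pos.2 hε).ne' ENNReal.ofReal_ne_top,
    ← lintegral_const_mul' _ _ ENNReal.ofReal_ne_top]
  refine (setLIntegral_mono' (measurableSet_le (by fun_prop) measurable_const)
    fun v hv => ofReal_mul_le_setLIntegral_shift hg he hε hv).trans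
    ((setLIntegral_le_lintegral _ _).trans_eq ?_)
  rw [lintegral_add_left (hRm.const_mul _), lintegral_const_mul _ hRm, lintegral_const_mul _ hDm,
    hRint, hDint, Real.volume_Ioc, Real.volume_Ioc, sub_zero, show 3 * ε - 2 * ε = ε by ring,
    mul_add, ← mul_assoc (ENNReal.ofReal ε) (ENNReal.ofReal (18 * ε ^ 2)), h18]
  ring

lemma lintegral_sq_mul_inv_le {g : E → ℝ} (hg : Differentiable ℝ g) {e : E} (he : ‖e‖ = 1)
    {ε : ℝ} (hε : 0 < ε) :
    ∫⁻ v, ENNReal.ofReal (g v ^ 2 * (1 + ‖v‖ ^ 2)⁻¹) ∂μ ≤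
      ENNReal.ofReal ((1 + 2 * (1 + 3 * ε) ^ 2) / ε ^ 2) *
          ∫⁻ v, ENNReal.ofReal (g v ^ 2 * (1 + ‖v‖ ^ 2)⁻¹ * ⟪e, v⟫ ^ 2) ∂μ
        + ENNReal.ofReal (18 * ε ^ 2) * ∫⁻ v, ENNReal.ofReal (‖fderiv ℝ g v‖ ^ 2) ∂μ := by
  have hgm : Measurable g := hg.continuous.measurable
  have hS : MeasurableSet {v : E | ⟪e, v⟫ ^ 2 ≤ ε ^ 2} :=
    measurableSet_le (by fun_prop) measurable_const
  have hoff : ∫⁻ v in {v | ⟪e, v⟫ ^ 2 ≤ ε ^ 2}ᶜ, ENNReal.ofReal (g v ^ 2 * (1 + ‖v‖ ^ 2)⁻¹) ∂μ ≤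
      ENNReal.ofReal (1 / ε ^ 2) *
        ∫⁻ v, ENNReal.ofReal (g v ^ 2 * (1 + ‖v‖ ^ 2)⁻¹ * ⟪e, v⟫ ^ 2) ∂μ := by
    rw [← lintegral_const_mul _ (by fun_prop)]
    refine (setLIntegral_mono (by fun_prop) fun v hv => ?_).trans (setLIntegral_le_lintegral _ _)
    rw [← ENNReal.ofReal_mul (by positivity)]
    refine ENNReal.ofReal_le_ofReal ?_
    have hv' : 1 ≤ 1 / ε ^ 2 * ⟪e, v⟫ ^ 2 := by
      rw [one_div, inv_mul_eq_div, one_le_div (by positivity)]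
      exact le_of_lt (not_le.1 hv)
    rw [mul_left_comm]
    exact le_mul_of_one_le_right (by positivity) hv'
  have hcoef : ENNReal.ofReal (2 * (1 + 3 * ε) ^ 2 / ε ^ 2) + ENNReal.ofReal (1 / ε ^ 2) =
      ENNReal.ofReal ((1 + 2 * (1 + 3 * ε) ^ 2) / ε ^ 2) := by
    rw [← ENNReal.ofReal_add (by positivity) (by positivity)]
    ring_nf
  rw [← lintegral_add_compl _ hS, ← hcoef, add_mul, add_right_comm]
  exact add_le_add (setLIntegral_strip_le μ hg he hε) hoff

/-- `δ ^ (3/16)` is the strip width `ε` that turns `δ^{-1/8} ε⁻²` into `δ^{-1/2}`. -/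
noncomputable def boundaryInterpolationConst (D : ℝ) : ℝ :=
  max (1 + 2 * (1 + 3 * D ^ (3 / 16 : ℝ)) ^ 2) (18 * D ^ (1 / 4 : ℝ))

lemma boundaryInterpolationConst_pos (D : ℝ) : 0 < boundaryInterpolationConst D :=
  lt_of_lt_of_le (by positivity) (le_max_left _ _)

lemma rpow_three_div_sixteen_sq {δ : ℝ} (hδ : 0 ≤ δ) :
    (δ ^ (3 / 16 : ℝ)) ^ 2 = δ ^ (3 / 8 : ℝ) := by
  rw [← Real.rpow_natCast, ← Real.rpow_mul hδ]
  norm_num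

lemma strip_coeff_mul_rpow_le {δ D : ℝ} (hδ : 0 < δ) (hδD : δ ≤ D) :
    (1 + 2 * (1 + 3 * δ ^ (3 / 16 : ℝ)) ^ 2) / (δ ^ (3 / 16 : ℝ)) ^ 2 * δ ^ (-(1 : ℝ) / 8) ≤
      boundaryInterpolationConst D * δ ^ (-(1 : ℝ) / 2) := by
  have hεD : δ ^ (3 / 16 : ℝ) ≤ D ^ (3 / 16 : ℝ) := Real.rpow_le_rpow hδ.le hδD (by norm_num)
  rw [div_mul_eq_mul_div, rpow_three_div_sixteen_sq hδ.le, mul_div_assoc, ← Real.rpow_sub hδ]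
  norm_num
  gcongr
  exact (by gcongr : 1 + 2 * (1 + 3 * δ ^ (3 / 16 : ℝ)) ^ 2 ≤ _).trans (le_max_left _ _)

lemma gradient_coeff_mul_rpow_le {δ D : ℝ} (hδ : 0 < δ) (hδD : δ ≤ D) :
    18 * (δ ^ (3 / 16 : ℝ)) ^ 2 * δ ^ (-(1 : ℝ) / 8) ≤ boundaryInterpolationConst D := by
  rw [rpow_three_div_sixteen_sq hδ.le, mul_assoc, ← Real.rpow_add hδ]
  norm_num
  exact (mul_le_mul_of_nonneg_left (Real.rpow_le_rpow hδ.le hδD (by norm_num))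
    (by norm_num)).trans (le_max_right _ _)

lemma lintegral_sq_mul_inv_mul_rpow_le {g : E → ℝ} (hg : Differentiable ℝ g) {e : E}
    (he : ‖e‖ = 1) {δ D : ℝ} (hδ : 0 < δ) (hδD : δ ≤ D) :
    ∫⁻ v, ENNReal.ofReal (g v ^ 2 * (1 + ‖v‖ ^ 2)⁻¹ * δ ^ (-(1 : ℝ) / 8)) ∂μ ≤
      ENNReal.ofReal (boundaryInterpolationConst D) *
          ∫⁻ v, ENNReal.ofReal (g v ^ 2 * (1 + ‖v‖ ^ 2)⁻¹ * ⟪e, v⟫ ^ 2 * δ ^ (-(1 : ℝ) / 2)) ∂μ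
        + ENNReal.ofReal (boundaryInterpolationConst D) *
          ∫⁻ v, ENNReal.ofReal (‖fderiv ℝ g v‖ ^ 2) ∂μ := by
  set ε := δ ^ (3 / 16 : ℝ)
  simp_rw [ENNReal.ofReal_mul' (Real.rpow_nonneg hδ.le (-(1 : ℝ) / 8)),
    ENNReal.ofReal_mul' (Real.rpow_nonneg hδ.le (-(1 : ℝ) / 2))]
  rw [lintegral_mul_const' _ _ ENNReal.ofReal_ne_top,
    lintegral_mul_const' _ _ ENNReal.ofReal_ne_top]
  calc _ ≤ (ENNReal.ofReal ((1 + 2 * (1 + 3 * ε) ^ 2) / ε ^ 2) *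
          ∫⁻ v, ENNReal.ofReal (g v ^ 2 * (1 + ‖v‖ ^ 2)⁻¹ * ⟪e, v⟫ ^ 2) ∂μ
        + ENNReal.ofReal (18 * ε ^ 2) * ∫⁻ v, ENNReal.ofReal (‖fderiv ℝ g v‖ ^ 2) ∂μ) *
          ENNReal.ofReal (δ ^ (-(1 : ℝ) / 8)) := by
        gcongr
        exact lintegral_sq_mul_inv_le μ hg he (Real.rpow_pos_of_pos hδ _)
    _ = ENNReal.ofReal ((1 + 2 * (1 + 3 * ε) ^ 2) / ε ^ 2 * δ ^ (-(1 : ℝ) / 8)) *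
          ∫⁻ v, ENNReal.ofReal (g v ^ 2 * (1 + ‖v‖ ^ 2)⁻¹ * ⟪e, v⟫ ^ 2) ∂μ
        + ENNReal.ofReal (18 * ε ^ 2 * δ ^ (-(1 : ℝ) / 8)) *
          ∫⁻ v, ENNReal.ofReal (‖fderiv ℝ g v‖ ^ 2) ∂μ := by
        rw [ENNReal.ofReal_mul (p := (1 + 2 * (1 + 3 * ε) ^ 2) / ε ^ 2) (by positivity),
          ENNReal.ofReal_mul (p := 18 * ε ^ 2) (by positivity)]
        ring
    _ ≤ ENNReal.ofReal (boundaryInterpolationConst D * δ ^ (-(1 : ℝ) / 2)) *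
          ∫⁻ v, ENNReal.ofReal (g v ^ 2 * (1 + ‖v‖ ^ 2)⁻¹ * ⟪e, v⟫ ^ 2) ∂μ
        + ENNReal.ofReal (boundaryInterpolationConst D) *
          ∫⁻ v, ENNReal.ofReal (‖fderiv ℝ g v‖ ^ 2) ∂μ := by
        gcongr ENNReal.ofReal ?_ * _ + ENNReal.ofReal ?_ * _
        · exact strip_coeff_mul_rpow_le hδ hδD
        · exact gradient_coeff_mul_rpow_le hδ hδD
    _ = _ := by
        rw [ENNReal.ofReal_mul (boundaryInterpolationConst_pos D).le]
        ring

end WeightedEstimates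

section Geometry

lemma frontier_nonempty_of_isBounded {V : Type*} [NormedAddCommGroup V] [NormedSpace ℝ V]
    [Nontrivial V] {s : Set V} (hs : Bornology.IsBounded s) (hne : s.Nonempty) :
    (frontier s).Nonempty :=
  nonempty_frontier_iff.2 ⟨hne, fun h => NormedSpace.unbounded_univ ℝ V (h ▸ hs)⟩

variable {X : Type*} [MetricSpace X] {s : Set X} {x : X}

lemma infDist_frontier_pos (hs : IsOpen s) (hfr : (frontier s).Nonempty) (hx : x ∈ s) :
    0 < Metric.infDist x (frontier s) :=
  (isClosed_frontier.notMem_iff_infDist_pos hfr).1 fun h =>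
    (hs.inter_frontier_eq.subset ⟨hx, h⟩ : x ∈ (∅ : Set X))

lemma infDist_frontier_le_diam (hs : Bornology.IsBounded s) (hfr : (frontier s).Nonempty)
    (hx : x ∈ s) : Metric.infDist x (frontier s) ≤ Metric.diam s := by
  obtain ⟨y, hy⟩ := hfr
  calc _ ≤ dist x y := Metric.infDist_le_dist_of_mem hy
    _ ≤ Metric.diam (closure s) :=
        Metric.dist_le_diam_of_mem hs.closure (subset_closure hx) (frontier_subset_closure hy)
    _ = Metric.diam s := Metric.diam_closure s

end Geometry

/-- Boundary-penalized interpolation inequality: for a bounded open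
`Ω ⊂ ℝ³` with unit normal field `n` and `δ(x) = dist(x, ∂Ω)`, there is `C` such that
`∫∫ f²⟨v⟩⁻²δ^{-1/8} ≤ C(∫∫ f²⟨v⟩⁻²(n·v)²δ^{-1/2} + ∫∫ |∇_v f|²)`. -/
theorem boundary_interpolation_inequality
    (Ω : Set (EuclideanSpace ℝ (Fin 3))) (hΩo : IsOpen Ω) (hΩb : Bornology.IsBounded Ω)
    (n : EuclideanSpace ℝ (Fin 3) → EuclideanSpace ℝ (Fin 3)) (hn : ∀ x, ‖n x‖ = 1) :
    ∃ C : ℝ, 0 < C ∧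
      ∀ f : EuclideanSpace ℝ (Fin 3) → EuclideanSpace ℝ (Fin 3) → ℝ,
        Measurable (fun q : EuclideanSpace ℝ (Fin 3) × EuclideanSpace ℝ (Fin 3) =>
          f q.1 q.2) →
        (∀ x ∈ Ω, Differentiable ℝ (f x)) →
        (∫⁻ x in Ω, ∫⁻ v : EuclideanSpace ℝ (Fin 3),
            ENNReal.ofReal ((f x v) ^ 2 * (1 + ‖v‖ ^ 2)⁻¹ *
              (Metric.infDist x (frontier Ω)) ^ (-(1 : ℝ) / 8)))
          ≤ ENNReal.ofReal C *
            ((∫⁻ x in Ω, ∫⁻ v : EuclideanSpace ℝ (Fin 3),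
                ENNReal.ofReal ((f x v) ^ 2 * (1 + ‖v‖ ^ 2)⁻¹ * ((inner ℝ (n x) v : ℝ)) ^ 2 *
                  (Metric.infDist x (frontier Ω)) ^ (-(1 : ℝ) / 2)))
              + ∫⁻ x in Ω, ∫⁻ v : EuclideanSpace ℝ (Fin 3),
                  ENNReal.ofReal (‖fderiv ℝ (f x) v‖ ^ 2)) := by
  rcases Ω.eq_empty_or_nonempty with rfl | hne
  · exact ⟨1, one_pos, fun f _ _ => by simp⟩
  have hfr := frontier_nonempty_of_isBounded hΩb hne
  refine ⟨_, boundaryInterpolationConst_pos (Metric.diam Ω), fun f hfm hdiff => ?_⟩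
  have henergy := aemeasurable_lintegral_sq_norm_fderiv_restrict hΩo.measurableSet hfm hdiff
    volume volume
  rw [mul_add, ← lintegral_const_mul' _ _ ENNReal.ofReal_ne_top,
    ← lintegral_const_mul' _ _ ENNReal.ofReal_ne_top,
    ← lintegral_add_right' _ (henergy.const_mul _)]
  exact setLIntegral_mono' hΩo.measurableSet fun x hx =>
    lintegral_sq_mul_inv_mul_rpow_le volume (hdiff x hx) (hn x) (infDist_frontier_pos hΩo hfr hx)
      (infDist_frontier_le_diam hΩb hfr hx)
end
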